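/- arXiv:2601.19301 — 5 statements merged into one kernel-verified Lean document; each statement's English description precedes it below -/
import Mathlib

section
/- Let R be a finite commutative local ring of order q^n with R/J(R) a field of order q and J(R)^{n-1} ≠ 0. For each i with 1 ≤ i ≤ n, |J(R)^{i-1} \ J(R)^i| = q^{n-i+1} - q^{n-i}; in particular the powers of J(R) form a strictly decreasing chain R ⊋ J ⊋ J^2 ⊋ … ⊋ J^n = 0 with |J^i| = q^{n-i}. -/
/-!
The maximal ideal `m = J(R)` of the finite (hence Artinian) ring `R` is nilpotent, so a repetition
`m^(i+1) = m^i` would force `m^i = 0`; since `m^(n-1) ≠ 0`, the chain `m^0 ⊋ m^1 ⊋ ⋯ ⊋ m^(n-1) ⊋ m^n`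
is strict. For `x ∈ m^i \ m^(i+1)` the map `r ↦ r x` embeds the residue field into `m^i / m^(i+1)`,
so `q |m^(i+1)| ≤ |m^i|`. Chaining these `n` inequalities between `|R| = q^n` and `|m^n| ≥ 1`
forces every one of them to be an equality, i.e. `|m^i| = q^(n-i)`.
-/

open IsLocalRing

theorem pow_eq_zero_of_pow_succ_eq_pow {M : Type*} [MonoidWithZero M] {a : M} (ha : IsNilpotent a)
    {i : ℕ} (h : a ^ (i + 1) = a ^ i) : a ^ i = 0 := by
  obtain ⟨k, hk⟩ := ha
  have hstable : ∀ j, a ^ (i + j) = a ^ i := by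
    intro j
    induction j with
    | zero => rfl
    | succ j ih => rw [← add_assoc, pow_succ, ih, ← pow_succ, h]
  rw [← hstable k, pow_add, hk, mul_zero]

theorem Ideal.pow_succ_lt_pow_of_isNilpotent {R : Type*} [CommSemiring R] {I : Ideal R}
    (hI : IsNilpotent I) {i : ℕ} (hi : I ^ i ≠ ⊥) : I ^ (i + 1) < I ^ i :=
  (Ideal.pow_le_pow_right i.le_succ).lt_of_ne fun h => hi (pow_eq_zero_of_pow_succ_eq_pow hI h)

theorem IsLocalRing.card_residue_mul_card_le {R M : Type*} [CommRing R] [IsLocalRing R]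
    [AddCommGroup M] [Module R M] [Finite M] {P Q : Submodule R M} (hQP : Q < P)
    (hmP : maximalIdeal R • P ≤ Q) :
    Nat.card (R ⧸ maximalIdeal R) * Nat.card Q ≤ Nat.card P := by
  obtain ⟨x, hxP, hxQ⟩ := SetLike.exists_of_lt hQP
  set Q' := Q.comap P.subtype
  let φ := LinearMap.toSpanSingleton R (P ⧸ Q') (Submodule.Quotient.mk ⟨x, hxP⟩)
  have hφ : ∀ r : R, φ r = 0 ↔ r • x ∈ Q := fun r => Submodule.Quotient.mk_eq_zero Q'
  have hker : maximalIdeal R = LinearMap.ker φ := by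
    refine (maximalIdeal.isMaximal R).eq_of_le ?_ fun r hr => (hφ r).2 ?_
    · exact (Ideal.ne_top_iff_one _).2 fun h1 => hxQ (by simpa using (hφ 1).1 h1)
    · exact hmP (Submodule.smul_mem_smul hr hxP)
  have hresidue : Nat.card (R ⧸ maximalIdeal R) ≤ Nat.card (P ⧸ Q') := by
    have : Finite (P ⧸ Q') := Finite.of_surjective _ Q'.mkQ_surjective
    exact Nat.card_le_card_of_injective _
      (LinearMap.ker_eq_bot.1 (Submodule.ker_liftQ_eq_bot' _ φ hker))
  have hQ' : Nat.card Q' = Nat.card Q :=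
    Nat.card_congr (Submodule.comapSubtypeEquivOfLe hQP.le).toEquiv
  calc Nat.card (R ⧸ maximalIdeal R) * Nat.card Q
      ≤ Nat.card (P ⧸ Q') * Nat.card Q' := by rw [hQ']; gcongr
    _ = Nat.card P := by rw [mul_comm, Submodule.card_eq_card_quotient_mul_card Q']

theorem Nat.eq_pow_sub_of_mul_le_of_pos {q n : ℕ} {c : ℕ → ℕ} (hq : 0 < q) (h0 : c 0 = q ^ n)
    (hc : 0 < c n) (hstep : ∀ i < n, q * c (i + 1) ≤ c i) : ∀ k ≤ n, c k = q ^ (n - k) := by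
  have hiter : ∀ j k, k + j ≤ n → q ^ j * c (k + j) ≤ c k := by
    intro j
    induction j with
    | zero => simp
    | succ j ih =>
      intro k hkj
      calc q ^ (j + 1) * c (k + (j + 1))
          = q ^ j * (q * c (k + j + 1)) := by ring_nf
        _ ≤ q ^ j * c (k + j) := Nat.mul_le_mul_left _ (hstep _ (by omega))
        _ ≤ c k := ih k (by omega)
  intro k hk
  refine le_antisymm ?_ ?_
  · have h := hiter k 0 (by omega)
    rw [zero_add, h0, ← Nat.add_sub_of_le hk, pow_add] at h
    exact Nat.le_of_mul_le_mul_left h (by positivity)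
  · calc q ^ (n - k) ≤ q ^ (n - k) * c n := Nat.le_mul_of_pos_right _ hc
      _ = q ^ (n - k) * c (k + (n - k)) := by rw [Nat.add_sub_cancel' hk]
      _ ≤ c k := hiter _ _ (by omega)

theorem card_jacobson_powers_general {R : Type*} [CommRing R] [Fintype R] [IsLocalRing R]
    (q n : ℕ)
    (hcard : Fintype.card R = q ^ n)
    (hres : Nat.card (R ⧸ (⊥ : Ideal R).jacobson) = q)
    (hJ : ((⊥ : Ideal R).jacobson) ^ (n - 1) ≠ ⊥) :
    (∀ i : ℕ, 1 ≤ i → i ≤ n →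
      ((((⊥ : Ideal R).jacobson ^ (i - 1) : Ideal R) : Set R) \
        (((⊥ : Ideal R).jacobson ^ i : Ideal R) : Set R)).ncard
        = q ^ (n - i + 1) - q ^ (n - i)) ∧
    (∀ i : ℕ, i < n →
      ((⊥ : Ideal R).jacobson ^ (i + 1) : Ideal R) < ((⊥ : Ideal R).jacobson ^ i : Ideal R)) ∧
    ((⊥ : Ideal R).jacobson) ^ n = ⊥ ∧
    (∀ i : ℕ, i ≤ n → Nat.card ((⊥ : Ideal R).jacobson ^ i : Ideal R) = q ^ (n - i)) := by
  have hnil := IsArtinianRing.isNilpotent_jacobson_bot (R := R)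
  rw [jacobson_eq_maximalIdeal ⊥ bot_ne_top] at hres hJ hnil ⊢
  set m := maximalIdeal R
  have hlt : ∀ i < n, m ^ (i + 1) < m ^ i := fun i hi =>
    Ideal.pow_succ_lt_pow_of_isNilpotent hnil fun h =>
      hJ (le_bot_iff.1 (h ▸ Ideal.pow_le_pow_right (by omega)))
  have hpow : ∀ i ≤ n, Nat.card (m ^ i : Ideal R) = q ^ (n - i) := by
    refine Nat.eq_pow_sub_of_mul_le_of_pos (hres ▸ Nat.card_pos) ?_ Nat.card_pos fun i hi => ?_
    · rw [pow_zero, Ideal.one_eq_top, Nat.card_congr Submodule.topEquiv.toEquiv,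
        Nat.card_eq_fintype_card, hcard]
    · rw [← hres]
      exact card_residue_mul_card_le (hlt i hi) (by rw [Ideal.smul_eq_mul, ← pow_succ'])
  have hbot : m ^ n = ⊥ := by
    have hsub : Subsingleton (m ^ n : Ideal R) :=
      (Nat.card_eq_one_iff_unique.1 ((hpow n le_rfl).trans (by simp))).1
    exact Submodule.eq_bot_of_subsingleton
  refine ⟨fun i hi hin => ?_, hlt, hbot, hpow⟩
  rw [Set.ncard_sdiff (Ideal.pow_le_pow_right (by omega)), ← Nat.card_coe_set_eq,
    ← Nat.card_coe_set_eq, SetLike.coe_sort_coe, SetLike.coe_sort_coe, hpow (i - 1) (by omega),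
    hpow i hin, show n - (i - 1) = n - i + 1 by omega]

theorem card_jacobson_powers {R : Type*} [CommRing R] [Fintype R] [IsLocalRing R]
    (q n : ℕ) (hn : 0 < n)
    (hcard : Fintype.card R = q ^ n)
    (hres : Nat.card (R ⧸ (⊥ : Ideal R).jacobson) = q)
    (hJ : ((⊥ : Ideal R).jacobson) ^ (n - 1) ≠ ⊥) :
    (∀ i : ℕ, 1 ≤ i → i ≤ n →
      ((((⊥ : Ideal R).jacobson ^ (i - 1) : Ideal R) : Set R) \
        (((⊥ : Ideal R).jacobson ^ i : Ideal R) : Set R)).ncard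
        = q ^ (n - i + 1) - q ^ (n - i)) ∧
    (∀ i : ℕ, i < n →
      ((⊥ : Ideal R).jacobson ^ (i + 1) : Ideal R) < ((⊥ : Ideal R).jacobson ^ i : Ideal R)) ∧
    ((⊥ : Ideal R).jacobson) ^ n = ⊥ ∧
    (∀ i : ℕ, i ≤ n → Nat.card ((⊥ : Ideal R).jacobson ^ i : Ideal R) = q ^ (n - i)) :=
  card_jacobson_powers_general q n hcard hres hJ
end

section
/- Let R be a finite commutative local ring of characteristic 2 with |R| = q^n (q even), J(R)^{n-1} ≠ 0, and R/J(R) a field of order q. Then for units s, v of R one has s^2 = v^2 if and only if s = v + j for some j ∈ J(R) with j^2 = 0; consequently, for every v in R^*, the set { s ∈ R^* : s^2 = v^2 } has exactly q^{⌊n/2⌋} elements. -/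
/-!
In characteristic 2 we have `s ^ 2 - v ^ 2 = (s - v) ^ 2`, so `s ↦ s - v` matches the units with
`s ^ 2 = v ^ 2` with the square-zero elements of `R` (the inverse `x ↦ v + x` lands in the units
since `x` is nilpotent).

To count the latter, write `𝔪` for the maximal ideal. As long as `𝔪 ^ k ≠ 0`, Nakayama makes
`𝔪 ^ k / 𝔪 ^ (k + 1)` a nonzero `R / 𝔪`-space, hence of size at least `q`. Since `|R| = q ^ n` and
`𝔪 ^ (n - 1) ≠ 0`, all these bounds are equalities: `|𝔪 ^ k| = q ^ (n - k)`, `𝔪 ^ n = 0`, and every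
`x ∈ 𝔪 ^ k \ 𝔪 ^ (k + 1)` generates `𝔪 ^ k`. For such an `x` with `x ^ 2 = 0` this gives
`𝔪 ^ (2 * k) = 0`, so `2 * k ≥ n`. Hence the square-zero elements form `𝔪 ^ (n - n / 2)`, which has
`q ^ (n / 2)` elements.
-/

open IsLocalRing Submodule Ideal

theorem Nat.eq_pow_sub_of_mul_le {q n : ℕ} {c : ℕ → ℕ} (hq : 0 < q)
    (hstep : ∀ i < n, q * c (i + 1) ≤ c i) (h0 : c 0 = q ^ n) (hn : 0 < c n) :
    ∀ k ≤ n, c k = q ^ (n - k) := by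
  have up : ∀ k ≤ n, q ^ k * c k ≤ c 0 := by
    intro k hk
    induction k with
    | zero => simp
    | succ k ih =>
      calc q ^ (k + 1) * c (k + 1) = q ^ k * (q * c (k + 1)) := by ring
        _ ≤ q ^ k * c k := Nat.mul_le_mul_left _ (hstep k hk)
        _ ≤ c 0 := ih (by omega)
  have down : ∀ j ≤ n, q ^ j ≤ c (n - j) := by
    intro j hj
    induction j with
    | zero => exact hn
    | succ j ih =>
      calc q ^ (j + 1) = q * q ^ j := by ring
        _ ≤ q * c (n - (j + 1) + 1) := by
          rw [show n - (j + 1) + 1 = n - j by omega]; exact Nat.mul_le_mul_left _ (ih (by omega))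
        _ ≤ c (n - (j + 1)) := hstep _ (by omega)
  intro k hk
  refine le_antisymm (Nat.le_of_mul_le_mul_left ?_ (pow_pos hq k)) ?_
  · rw [← pow_add, Nat.add_sub_cancel' hk, ← h0]; exact up k hk
  · simpa [Nat.sub_sub_self hk] using down (n - k) (Nat.sub_le n k)

theorem Ideal.exists_mem_pow_notMem_pow_succ_of_notMem_pow {R : Type*} [CommSemiring R]
    {I : Ideal R} {x : R} {n : ℕ} (hx : x ∉ I ^ n) : ∃ k < n, x ∈ I ^ k ∧ x ∉ I ^ (k + 1) := by
  induction n with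
  | zero => simp at hx
  | succ n ih =>
    by_cases hxn : x ∈ I ^ n
    · exact ⟨n, n.lt_succ_self, hxn, hx⟩
    · obtain ⟨k, hk, hxk⟩ := ih hxn
      exact ⟨k, by omega, hxk⟩

section CharTwo

variable {R : Type*} [CommRing R] [CharP R 2]

theorem CharTwo.sq_eq_sq_iff_sub_sq_eq_zero {a b : R} : a ^ 2 = b ^ 2 ↔ (a - b) ^ 2 = 0 := by
  rw [CharTwo.sub_eq_add, CharTwo.add_sq, CharTwo.add_eq_zero]

theorem CharTwo.sq_eq_sq_iff_exists_mem_jacobson {a b : R} :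
    a ^ 2 = b ^ 2 ↔ ∃ j ∈ (⊥ : Ideal R).jacobson, j ^ 2 = 0 ∧ a = b + j := by
  refine CharTwo.sq_eq_sq_iff_sub_sq_eq_zero.trans
    ⟨fun h => ⟨a - b, radical_le_jacobson ⟨2, h⟩, h, by ring⟩, ?_⟩
  rintro ⟨j, -, hj, rfl⟩
  rwa [add_sub_cancel_left]

theorem CharTwo.ncard_units_sq_eq_sq (v : Rˣ) :
    {s : Rˣ | (s : R) ^ 2 = (v : R) ^ 2}.ncard = {x : R | x ^ 2 = 0}.ncard := by
  refine Set.ncard_congr (fun s _ => (s : R) - v)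
    (fun s hs => CharTwo.sq_eq_sq_iff_sub_sq_eq_zero.1 hs)
    (fun s t _ _ h => Units.ext (sub_left_injective h)) fun x hx => ?_
  obtain ⟨u, hu⟩ := IsNilpotent.isUnit_add_left_of_commute ⟨2, hx⟩ v.isUnit (Commute.all _ _)
  have hux : (u : R) - v = x := by rw [hu, add_sub_cancel_left]
  exact ⟨u, CharTwo.sq_eq_sq_iff_sub_sq_eq_zero.2 (hux ▸ hx), hux⟩

end CharTwo

section Module

variable {R M : Type*} [CommRing R] [IsLocalRing R] [AddCommGroup M] [Module R M]

theorem torsionOf_mkQ_eq_maximalIdeal {x : M} (hx : x ∉ maximalIdeal R • (⊤ : Submodule R M)) :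
    torsionOf R _ ((maximalIdeal R • ⊤ : Submodule R M).mkQ x) = maximalIdeal R := by
  refine ((maximalIdeal.isMaximal R).eq_of_le ?_ ?_).symm
  · rwa [Ne, torsionOf_eq_top_iff R, mkQ_apply, Quotient.mk_eq_zero]
  · intro r hr
    rw [mem_torsionOf_iff, ← map_smul, mkQ_apply, Quotient.mk_eq_zero]
    exact smul_mem_smul hr mem_top

theorem card_span_mkQ_eq_card_residue {x : M} (hx : x ∉ maximalIdeal R • (⊤ : Submodule R M)) :
    Nat.card (R ∙ (maximalIdeal R • ⊤ : Submodule R M).mkQ x) =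
      Nat.card (R ⧸ maximalIdeal R) := by
  rw [← Nat.card_congr (quotTorsionOfEquivSpanSingleton R _ _).toEquiv,
    torsionOf_mkQ_eq_maximalIdeal hx]

theorem card_residue_le_card_quotient [Finite M] {x : M}
    (hx : x ∉ maximalIdeal R • (⊤ : Submodule R M)) :
    Nat.card (R ⧸ maximalIdeal R) ≤ Nat.card (M ⧸ maximalIdeal R • (⊤ : Submodule R M)) :=
  have := Finite.of_surjective _ (mkQ_surjective (maximalIdeal R • ⊤ : Submodule R M))
  card_span_mkQ_eq_card_residue hx ▸ Nat.card_le_card_of_injective Subtype.val Subtype.val_injective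

theorem span_singleton_eq_top_of_card_quotient_eq [Finite M] {x : M}
    (hx : x ∉ maximalIdeal R • (⊤ : Submodule R M))
    (hcard : Nat.card (M ⧸ maximalIdeal R • (⊤ : Submodule R M)) =
      Nat.card (R ⧸ maximalIdeal R)) :
    R ∙ x = ⊤ := by
  have := Finite.of_surjective _ (mkQ_surjective (maximalIdeal R • ⊤ : Submodule R M))
  rw [← IsLocalRing.map_mkQ_eq_top, Submodule.map_span, Set.image_singleton]
  exact toAddSubgroup_injective <| AddSubgroup.eq_top_of_card_eq _ <|
    (card_span_mkQ_eq_card_residue hx).trans hcard.symm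

end Module

instance Ideal.Quotient.finite_of_finite {R : Type*} [CommRing R] [Finite R] (I : Ideal R) :
    Finite (R ⧸ I) :=
  Finite.of_surjective _ Ideal.Quotient.mk_surjective

section PowMaximalIdeal

variable {R : Type*} [CommRing R] [IsLocalRing R]

theorem map_subtype_maximalIdeal_smul_top (k : ℕ) :
    (maximalIdeal R • ⊤ : Submodule R ↥(maximalIdeal R ^ k)).map (maximalIdeal R ^ k).subtype =
      maximalIdeal R ^ (k + 1) := by
  rw [map_smul'', map_subtype_top, smul_eq_mul, ← pow_succ']

theorem mk_mem_maximalIdeal_smul_top_iff {k : ℕ} {x : R} (hx : x ∈ maximalIdeal R ^ k) :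
    (⟨x, hx⟩ : ↥(maximalIdeal R ^ k)) ∈
        (maximalIdeal R • ⊤ : Submodule R ↥(maximalIdeal R ^ k)) ↔
      x ∈ maximalIdeal R ^ (k + 1) := by
  rw [← map_subtype_maximalIdeal_smul_top]
  exact ⟨mem_map_of_mem, fun ⟨y, hy, hyx⟩ => (Subtype.ext hyx : y = ⟨x, hx⟩) ▸ hy⟩

theorem card_pow_maximalIdeal_eq_mul (k : ℕ) :
    Nat.card ↥(maximalIdeal R ^ k) = Nat.card ↥(maximalIdeal R ^ (k + 1)) *
      Nat.card (↥(maximalIdeal R ^ k) ⧸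
        (maximalIdeal R • ⊤ : Submodule R ↥(maximalIdeal R ^ k))) := by
  rw [card_eq_card_quotient_mul_card (maximalIdeal R • ⊤ : Submodule R ↥(maximalIdeal R ^ k)),
    ← map_subtype_maximalIdeal_smul_top k,
    ← Nat.card_congr (equivMapOfInjective _ (injective_subtype _) _).toEquiv]

variable [Finite R]

theorem card_residue_mul_card_pow_succ_le {k : ℕ} (h : maximalIdeal R ^ k ≠ ⊥) :
    Nat.card (R ⧸ maximalIdeal R) * Nat.card ↥(maximalIdeal R ^ (k + 1)) ≤
      Nat.card ↥(maximalIdeal R ^ k) := by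
  obtain ⟨x, hxk, hxk'⟩ : ∃ x ∈ maximalIdeal R ^ k, x ∉ maximalIdeal R ^ (k + 1) := by
    by_contra! hle
    refine h (eq_bot_of_le_smul_of_le_jacobson_bot (maximalIdeal R) _ (IsNoetherian.noetherian _)
      ?_ (maximalIdeal_le_jacobson _))
    rwa [smul_eq_mul, ← pow_succ']
  rw [card_pow_maximalIdeal_eq_mul k, mul_comm]
  exact Nat.mul_le_mul_left _ (card_residue_le_card_quotient
    ((mk_mem_maximalIdeal_smul_top_iff hxk).not.2 hxk'))

variable {q n : ℕ}

theorem card_pow_maximalIdeal (hcard : Nat.card R = q ^ n)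
    (hres : Nat.card (R ⧸ maximalIdeal R) = q) (hJ : maximalIdeal R ^ (n - 1) ≠ ⊥)
    {k : ℕ} (hk : k ≤ n) :
    Nat.card ↥(maximalIdeal R ^ k) = q ^ (n - k) := by
  have hstep : ∀ i < n,
      q * Nat.card ↥(maximalIdeal R ^ (i + 1)) ≤ Nat.card ↥(maximalIdeal R ^ i) :=
    fun i hi => hres ▸ card_residue_mul_card_pow_succ_le fun h =>
      hJ (eq_bot_iff.2 ((pow_le_pow_right (by omega)).trans h.le))
  have h0 : Nat.card ↥(maximalIdeal R ^ 0) = q ^ n := by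
    rw [pow_zero, one_eq_top, Nat.card_congr topEquiv.toEquiv, hcard]
  exact Nat.eq_pow_sub_of_mul_le (c := fun i => Nat.card ↥(maximalIdeal R ^ i))
    (hres ▸ Nat.card_pos) hstep h0 Nat.card_pos k hk

theorem pow_maximalIdeal_eq_bot (hcard : Nat.card R = q ^ n)
    (hres : Nat.card (R ⧸ maximalIdeal R) = q) (hJ : maximalIdeal R ^ (n - 1) ≠ ⊥) :
    maximalIdeal R ^ n = ⊥ := by
  have h := card_pow_maximalIdeal hcard hres hJ le_rfl
  rw [Nat.sub_self, pow_zero, Nat.card_eq_one_iff_unique] at h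
  have := h.1
  exact eq_bot_of_subsingleton

theorem pow_maximalIdeal_eq_span_singleton (hcard : Nat.card R = q ^ n)
    (hres : Nat.card (R ⧸ maximalIdeal R) = q) (hJ : maximalIdeal R ^ (n - 1) ≠ ⊥)
    {k : ℕ} (hk : k < n) {x : R} (hx : x ∈ maximalIdeal R ^ k)
    (hx' : x ∉ maximalIdeal R ^ (k + 1)) :
    maximalIdeal R ^ k = span {x} := by
  have hgr : Nat.card (↥(maximalIdeal R ^ k) ⧸
      (maximalIdeal R • ⊤ : Submodule R ↥(maximalIdeal R ^ k))) =
        Nat.card (R ⧸ maximalIdeal R) := by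
    have h := card_pow_maximalIdeal_eq_mul (R := R) k
    rw [card_pow_maximalIdeal hcard hres hJ hk.le, card_pow_maximalIdeal hcard hres hJ hk,
      show n - k = n - (k + 1) + 1 by omega, pow_succ] at h
    exact hres ▸ (Nat.eq_of_mul_eq_mul_left (pow_pos (hres ▸ Nat.card_pos) _) h).symm
  have htop := span_singleton_eq_top_of_card_quotient_eq
    ((mk_mem_maximalIdeal_smul_top_iff hx).not.2 hx') hgr
  simpa [Submodule.map_span] using congr_arg (map (maximalIdeal R ^ k).subtype) htop.symm

theorem setOf_sq_eq_zero_eq_pow_maximalIdeal (hcard : Nat.card R = q ^ n)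
    (hres : Nat.card (R ⧸ maximalIdeal R) = q) (hJ : maximalIdeal R ^ (n - 1) ≠ ⊥) :
    {x : R | x ^ 2 = 0} = ↑(maximalIdeal R ^ (n - n / 2)) := by
  have hbot : ∀ m ≥ n, maximalIdeal R ^ m = ⊥ := fun m hm =>
    eq_bot_iff.2 ((pow_le_pow_right hm).trans (pow_maximalIdeal_eq_bot hcard hres hJ).le)
  ext x
  refine ⟨fun hx => ?_, fun hx => ?_⟩
  · by_cases hx0 : x = 0
    · simp [hx0]
    obtain ⟨k, hk, hxk, hxk'⟩ := exists_mem_pow_notMem_pow_succ_of_notMem_pow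
      (by rwa [hbot n le_rfl, Ideal.mem_bot] : x ∉ maximalIdeal R ^ n)
    have h2k : maximalIdeal R ^ (2 * k) = ⊥ := by
      rw [pow_mul', pow_maximalIdeal_eq_span_singleton hcard hres hJ hk hxk hxk',
        span_singleton_pow, hx.out, Ideal.span_singleton_eq_bot]
    have : n ≤ 2 * k := by
      by_contra! hlt
      exact hJ (eq_bot_iff.2 ((pow_le_pow_right (by omega)).trans h2k.le))
    exact pow_le_pow_right (by omega) hxk
  · have := pow_mem_pow hx 2
    rwa [← pow_mul, hbot _ (by omega), Ideal.mem_bot] at this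

end PowMaximalIdeal

theorem sq_eq_sq_char_two_general {R : Type*} [CommRing R] [Fintype R] [IsLocalRing R]
    (q n : ℕ) (hchar : ringChar R = 2)
    (hcard : Fintype.card R = q ^ n)
    (hres : Nat.card (R ⧸ (⊥ : Ideal R).jacobson) = q)
    (hJ : ((⊥ : Ideal R).jacobson) ^ (n - 1) ≠ ⊥) :
    (∀ s v : Rˣ, (s : R) ^ 2 = (v : R) ^ 2 ↔
      ∃ j ∈ (⊥ : Ideal R).jacobson, j ^ 2 = 0 ∧ (s : R) = (v : R) + j) ∧
    (∀ v : Rˣ, {s : Rˣ | (s : R) ^ 2 = (v : R) ^ 2}.ncard = q ^ (n / 2)) := by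
  have := ringChar.of_eq hchar
  refine ⟨fun s v => CharTwo.sq_eq_sq_iff_exists_mem_jacobson, fun v => ?_⟩
  rw [jacobson_eq_maximalIdeal ⊥ bot_ne_top] at hres hJ
  have hcard' : Nat.card R = q ^ n := Nat.card_eq_fintype_card.trans hcard
  rw [CharTwo.ncard_units_sq_eq_sq, setOf_sq_eq_zero_eq_pow_maximalIdeal hcard' hres hJ,
    ← Nat.card_coe_set_eq, SetLike.coe_sort_coe,
    card_pow_maximalIdeal hcard' hres hJ (Nat.sub_le _ _)]
  congr 1
  omega

theorem sq_eq_sq_char_two {R : Type*} [CommRing R] [Fintype R] [IsLocalRing R]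
    (q n : ℕ) (hn : 0 < n) (hq : Even q) (hchar : ringChar R = 2)
    (hcard : Fintype.card R = q ^ n)
    (hres : Nat.card (R ⧸ (⊥ : Ideal R).jacobson) = q)
    (hJ : ((⊥ : Ideal R).jacobson) ^ (n - 1) ≠ ⊥) :
    (∀ s v : Rˣ, (s : R) ^ 2 = (v : R) ^ 2 ↔
      ∃ j ∈ (⊥ : Ideal R).jacobson, j ^ 2 = 0 ∧ (s : R) = (v : R) + j) ∧
    (∀ v : Rˣ, {s : Rˣ | (s : R) ^ 2 = (v : R) ^ 2}.ncard = q ^ (n / 2)) :=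
  sq_eq_sq_char_two_general q n hchar hcard hres hJ
end

section
/- Let R be a finite commutative local ring of order q^n with R/J(R) of order q and J(R)^{n-1} ≠ 0. Fix u ∈ J^k \ J^{k+1} and l ≤ k/2. For s ∈ J^l \ J^{l+1} define T'(s) = { t ∈ J^{k-l} \ J^{k-l+1} : s*t = u }. Then |T'(s)| = q^l, and for s1, s2 ∈ J^l \ J^{l+1} one has T'(s1) = T'(s2) if and only if s1 - s2 ∈ J^{n-k+l}. -/
open IsLocalRing

/-- If `a * v` falls one power deeper than `v`, then `a` is in the maximal ideal. -/
private lemma aux_ker {R : Type*} [CommRing R] [IsLocalRing R] {i : ℕ} {v a : R}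
    (hv' : v ∉ ((⊥ : Ideal R).jacobson) ^ (i + 1))
    (ha : a * v ∈ ((⊥ : Ideal R).jacobson) ^ (i + 1)) :
    a ∈ (⊥ : Ideal R).jacobson := by
  rw [IsLocalRing.jacobson_eq_maximalIdeal (⊥ : Ideal R) bot_ne_top] at *
  have hK : ((maximalIdeal R ^ (i + 1)).colon (Ideal.span {v})) ≠ ⊤ := by
    intro h
    apply hv'
    have h1 : (1 : R) ∈ ((maximalIdeal R ^ (i + 1)).colon (Ideal.span {v})) := by
      rw [h]; trivial
    simpa using Ideal.mem_colon_span_singleton.mp h1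
  exact IsLocalRing.le_maximalIdeal hK (Ideal.mem_colon_span_singleton.mpr ha)

private lemma step_lemma {R : Type*} [CommRing R] [Fintype R] [IsLocalRing R] (i : ℕ) (v : R)
    (hv : v ∈ ((⊥ : Ideal R).jacobson) ^ i) (hv' : v ∉ ((⊥ : Ideal R).jacobson) ^ (i + 1)) :
    Nat.card (R ⧸ (⊥ : Ideal R).jacobson) * Nat.card ↥(((⊥ : Ideal R).jacobson) ^ (i + 1)) ≤
      Nat.card ↥(((⊥ : Ideal R).jacobson) ^ i) ∧
    (Nat.card (R ⧸ (⊥ : Ideal R).jacobson) * Nat.card ↥(((⊥ : Ideal R).jacobson) ^ (i + 1)) =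
        Nat.card ↥(((⊥ : Ideal R).jacobson) ^ i) →
      ((⊥ : Ideal R).jacobson) ^ i ≤ Ideal.span {v} ⊔ ((⊥ : Ideal R).jacobson) ^ (i + 1)) := by
  set J := (⊥ : Ideal R).jacobson with hJdef
  set P : Submodule R R := J ^ i with hP
  have hle : (J ^ (i + 1) : Ideal R) ≤ P := Ideal.pow_le_pow_right (Nat.le_succ i)
  set N : Submodule R ↥P := Submodule.comap P.subtype (J ^ (i + 1)) with hN
  have hcardN : Nat.card ↥N = Nat.card ↥(J ^ (i + 1)) :=
    Nat.card_congr (Submodule.comapSubtypeEquivOfLe hle).toEquiv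
  set h : R →ₗ[R] (↥P ⧸ N) := N.mkQ ∘ₗ LinearMap.toSpanSingleton R P ⟨v, hv⟩ with hh
  have happly : ∀ a : R, h a = N.mkQ ⟨a * v, P.smul_mem a hv⟩ := by
    intro a
    have hsm : (a • (⟨v, hv⟩ : ↥P)) = ⟨a * v, P.smul_mem a hv⟩ := by
      apply Subtype.ext
      simp [smul_eq_mul]
    rw [hh, LinearMap.comp_apply, LinearMap.toSpanSingleton_apply, hsm]
  have hker : LinearMap.ker h = J := by
    ext a
    rw [LinearMap.mem_ker, happly, Submodule.mkQ_apply, Submodule.Quotient.mk_eq_zero]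
    simp only [hN, Submodule.mem_comap, Submodule.subtype_apply]
    constructor
    · intro ha; exact aux_ker hv' ha
    · intro ha
      have : a * v ∈ J * J ^ i := Ideal.mul_mem_mul ha hv
      rwa [← pow_succ'] at this
  have h1 : Nat.card (R ⧸ J) = Nat.card ↥(LinearMap.range h) := by
    rw [← hker]
    exact Nat.card_congr h.quotKerEquivRange.toEquiv
  have h2 : Nat.card ↥P = Nat.card ↥N * Nat.card (↥P ⧸ N) :=
    Submodule.card_eq_card_quotient_mul_card N
  haveI : Finite (↥P ⧸ N) := Quotient.finite _
  have h3 : Nat.card ↥(LinearMap.range h) ≤ Nat.card (↥P ⧸ N) :=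
    Nat.card_le_card_of_injective _ Subtype.val_injective
  constructor
  · calc Nat.card (R ⧸ J) * Nat.card ↥(J ^ (i + 1))
        = Nat.card ↥(LinearMap.range h) * Nat.card ↥N := by rw [h1, hcardN]
      _ ≤ Nat.card (↥P ⧸ N) * Nat.card ↥N := Nat.mul_le_mul_right _ h3
      _ = Nat.card ↥P := by rw [h2, Nat.mul_comm]
  · intro heq
    have hNpos : 0 < Nat.card ↥N := by
      have : Nonempty ↥N := ⟨⟨0, N.zero_mem⟩⟩
      exact Nat.card_pos
    have hrq : Nat.card (↥P ⧸ N) = Nat.card ↥(LinearMap.range h) := by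
      have h5 : Nat.card ↥(LinearMap.range h) * Nat.card ↥N = Nat.card (↥P ⧸ N) * Nat.card ↥N := by
        rw [← h1, hcardN, heq, h2, hcardN]; ring
      exact (Nat.eq_of_mul_eq_mul_right hNpos h5).symm
  -- range h = ⊤
    have htop : LinearMap.range h = ⊤ := by
      have h4 := Submodule.card_eq_card_quotient_mul_card (LinearMap.range h)
      have hrpos : 0 < Nat.card ↥(LinearMap.range h) := by
        have : Nonempty ↥(LinearMap.range h) := ⟨⟨0, Submodule.zero_mem _⟩⟩
        exact Nat.card_pos
      have hq1 : Nat.card ((↥P ⧸ N) ⧸ LinearMap.range h) = 1 := by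
        rw [hrq] at h4
        have := h4.symm
        nth_rewrite 2 [← Nat.mul_one (Nat.card ↥(LinearMap.range h))] at this
        exact Nat.eq_of_mul_eq_mul_left hrpos this
      have hsub : Subsingleton ((↥P ⧸ N) ⧸ LinearMap.range h) :=
        (Nat.card_eq_one_iff_unique.mp hq1).1
      rw [eq_top_iff]
      intro y _
      have : (LinearMap.range h).mkQ y = (LinearMap.range h).mkQ 0 := Subsingleton.elim _ _
      rw [map_zero, Submodule.mkQ_apply, Submodule.Quotient.mk_eq_zero] at this
      exact this
    intro x hx
    have hmem : N.mkQ ⟨x, hx⟩ ∈ LinearMap.range h := htop ▸ Submodule.mem_top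
    obtain ⟨a, ha⟩ := hmem
    rw [happly] at ha
    have hsub : x - a * v ∈ J ^ (i + 1) := by
      have : (⟨a * v, P.smul_mem a hv⟩ - ⟨x, hx⟩ : ↥P) ∈ N :=
        (Submodule.Quotient.eq N).mp ha
      have h5 : ((⟨a * v, P.smul_mem a hv⟩ - ⟨x, hx⟩ : ↥P) : R) ∈ J ^ (i + 1) := this
      have h6 : a * v - x ∈ J ^ (i + 1) := by simpa using h5
      simpa using (J ^ (i + 1)).neg_mem h6
    have hxeq : x = a * v + (x - a * v) := by ring
    rw [hxeq]
    exact Submodule.add_mem_sup (Ideal.mem_span_singleton'.mpr ⟨a, rfl⟩) hsub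

theorem solution_sets_T' {R : Type*} [CommRing R] [Fintype R] [IsLocalRing R]
    (q n k l : ℕ) (hn : 0 < n) (hk : k ≤ n - 1) (hl : 2 * l ≤ k)
    (hcard : Fintype.card R = q ^ n)
    (hres : Nat.card (R ⧸ (⊥ : Ideal R).jacobson) = q)
    (hJ : ((⊥ : Ideal R).jacobson) ^ (n - 1) ≠ ⊥)
    (u : R) (hu : u ∈ ((⊥ : Ideal R).jacobson) ^ k)
    (hu' : u ∉ ((⊥ : Ideal R).jacobson) ^ (k + 1)) :
    (∀ s : R, s ∈ ((⊥ : Ideal R).jacobson) ^ l → s ∉ ((⊥ : Ideal R).jacobson) ^ (l + 1) →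
      {t : R | t ∈ ((⊥ : Ideal R).jacobson) ^ (k - l) ∧
        t ∉ ((⊥ : Ideal R).jacobson) ^ (k - l + 1) ∧ s * t = u}.ncard = q ^ l) ∧
    (∀ s₁ s₂ : R,
      s₁ ∈ ((⊥ : Ideal R).jacobson) ^ l → s₁ ∉ ((⊥ : Ideal R).jacobson) ^ (l + 1) →
      s₂ ∈ ((⊥ : Ideal R).jacobson) ^ l → s₂ ∉ ((⊥ : Ideal R).jacobson) ^ (l + 1) →
      ({t : R | t ∈ ((⊥ : Ideal R).jacobson) ^ (k - l) ∧
          t ∉ ((⊥ : Ideal R).jacobson) ^ (k - l + 1) ∧ s₁ * t = u} =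
        {t : R | t ∈ ((⊥ : Ideal R).jacobson) ^ (k - l) ∧
          t ∉ ((⊥ : Ideal R).jacobson) ^ (k - l + 1) ∧ s₂ * t = u} ↔
        s₁ - s₂ ∈ ((⊥ : Ideal R).jacobson) ^ (n - k + l))) := by
  classical
  set J := (⊥ : Ideal R).jacobson with hJdef
  have hkn : k + 1 ≤ n := by omega
  have hln : l < n := by omega
  have hkln : k - l < n := by omega
  -- q ≥ 2
  have hq2 : 2 ≤ q := by
    rw [← hres]
    have hJt : J ≠ ⊤ := by
      rw [hJdef, IsLocalRing.jacobson_eq_maximalIdeal (⊥ : Ideal R) bot_ne_top]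
      exact (IsLocalRing.maximalIdeal.isMaximal R).ne_top
    haveI : Finite (R ⧸ J) := Quotient.finite _
    have hnt : Nontrivial (R ⧸ J) := Ideal.Quotient.nontrivial_iff.mpr hJt
    exact Finite.one_lt_card_iff_nontrivial.mpr hnt
  have hq0 : 0 < q := by omega
  -- every J^i is FG
  have hfg : ∀ m : Ideal R, m.FG := by
    intro m
    exact ⟨(Set.toFinite (m : Set R)).toFinset, by rw [Set.Finite.coe_toFinset]; exact Submodule.span_eq m⟩
  -- J^i ≠ J^(i+1) for i ≤ n-1
  have hne : ∀ i, i ≤ n - 1 → J ^ i ≠ J ^ (i + 1) := by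
    intro i hi heq
    have hbot : J ^ i = ⊥ := by
      rw [eq_bot_iff]
      refine Submodule.le_of_le_smul_of_le_jacobson_bot (hfg (J ^ i)) le_rfl ?_
      rw [bot_sup_eq, smul_eq_mul, ← pow_succ', ← heq]
    exact hJ (eq_bot_iff.mpr ((Ideal.pow_le_pow_right hi).trans hbot.le))
  have hvex : ∀ i, i < n → ∃ v, v ∈ J ^ i ∧ v ∉ J ^ (i + 1) := by
    intro i hi
    have hlt : J ^ (i + 1) < J ^ i :=
      lt_of_le_of_ne (Ideal.pow_le_pow_right (Nat.le_succ i)) (fun e => hne i (by omega) e.symm)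
    obtain ⟨v, hv1, hv2⟩ := SetLike.exists_of_lt hlt
    exact ⟨v, hv1, hv2⟩
  have hstep : ∀ i, i < n → q * Nat.card ↥(J ^ (i + 1)) ≤ Nat.card ↥(J ^ i) := by
    intro i hi
    obtain ⟨v, hv, hv'⟩ := hvex i hi
    have := (step_lemma i v hv hv').1
    rwa [hres] at this
  -- upper bound
  have hub : ∀ i, i ≤ n → q ^ i * Nat.card ↥(J ^ i) ≤ q ^ n := by
    intro i
    induction i with
    | zero =>
      intro _
      have : Nat.card ↥(J ^ 0) = q ^ n := by
        rw [pow_zero, Ideal.one_eq_top]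
        rw [← hcard, ← Nat.card_eq_fintype_card]
        exact Nat.card_congr Submodule.topEquiv.toEquiv
      rw [pow_zero, one_mul, this]
    | succ i ih =>
      intro hi
      calc q ^ (i + 1) * Nat.card ↥(J ^ (i + 1))
          = q ^ i * (q * Nat.card ↥(J ^ (i + 1))) := by ring
        _ ≤ q ^ i * Nat.card ↥(J ^ i) := Nat.mul_le_mul_left _ (hstep i (by omega))
        _ ≤ q ^ n := ih (by omega)
  -- lower bound
  have hlb : ∀ j, j ≤ n → q ^ j ≤ Nat.card ↥(J ^ (n - j)) := by
    intro j
    induction j with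
    | zero =>
      intro _
      haveI : Nonempty ↥(J ^ (n - 0)) := ⟨⟨0, Submodule.zero_mem _⟩⟩
      rw [pow_zero]
      exact Nat.card_pos
    | succ j ih =>
      intro hj
      have hstep' := hstep (n - (j + 1)) (by omega)
      have he : n - (j + 1) + 1 = n - j := by omega
      rw [he] at hstep'
      calc q ^ (j + 1) = q * q ^ j := by ring
        _ ≤ q * Nat.card ↥(J ^ (n - j)) := Nat.mul_le_mul_left _ (ih (by omega))
        _ ≤ Nat.card ↥(J ^ (n - (j + 1))) := hstep'
  have hcardJ : ∀ i, i ≤ n → Nat.card ↥(J ^ i) = q ^ (n - i) := by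
    intro i hi
    refine le_antisymm ?_ ?_
    · have h1 := hub i hi
      have h2 : q ^ i * q ^ (n - i) = q ^ n := by
        rw [← pow_add]; congr 1; omega
      rw [← h2] at h1
      exact Nat.le_of_mul_le_mul_left h1 (pow_pos hq0 i)
    · have := hlb (n - i) (by omega)
      have he : n - (n - i) = i := by omega
      rwa [he] at this
  -- J^n = ⊥
  have hJn : J ^ n = ⊥ := by
    have h1 : Nat.card ↥(J ^ n) = 1 := by
      have := hcardJ n le_rfl
      simpa using this
    have hsub : Subsingleton ↥(J ^ n) := (Nat.card_eq_one_iff_unique.mp h1).1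
    rw [eq_bot_iff]
    intro x hx
    have : (⟨x, hx⟩ : ↥(J ^ n)) = ⟨0, Submodule.zero_mem _⟩ := Subsingleton.elim _ _
    simpa using congrArg Subtype.val this
  -- span
  have hspan : ∀ i, i < n → ∀ v, v ∈ J ^ i → v ∉ J ^ (i + 1) → Ideal.span {v} = J ^ i := by
    intro i hi v hv hv'
    have heq : Nat.card (R ⧸ J) * Nat.card ↥(J ^ (i + 1)) = Nat.card ↥(J ^ i) := by
      rw [hres, hcardJ (i + 1) (by omega), hcardJ i (by omega), ← pow_succ']
      congr 1; omega
    have hle := (step_lemma i v hv hv').2 heq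
    refine le_antisymm ?_ ?_
    · rw [Ideal.span_le, Set.singleton_subset_iff]; exact hv
    · refine Submodule.le_of_le_smul_of_le_jacobson_bot (hfg (J ^ i)) le_rfl ?_
      rwa [smul_eq_mul, ← pow_succ']
  -- annihilator
  have hann : ∀ i, i < n → ∀ v, v ∈ J ^ i → v ∉ J ^ (i + 1) →
      ∀ x : R, v * x = 0 ↔ x ∈ J ^ (n - i) := by
    intro i hi v hv hv'
    set f : R →ₗ[R] R := LinearMap.toSpanSingleton R R v with hf
    have hrange : LinearMap.range f = J ^ i := by
      rw [← LinearMap.span_singleton_eq_range]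
      have : (R ∙ v) = Ideal.span {v} := rfl
      rw [this, hspan i hi v hv hv']
    have hcardr : Nat.card (R ⧸ LinearMap.ker f) = q ^ (n - i) := by
      rw [Nat.card_congr f.quotKerEquivRange.toEquiv, hrange, hcardJ i (by omega)]
    have hcardker : Nat.card ↥(LinearMap.ker f) = q ^ i := by
      have h1 := Submodule.card_eq_card_quotient_mul_card (LinearMap.ker f)
      rw [Nat.card_eq_fintype_card, hcard] at h1
      rw [hcardr] at h1
      have h2 : q ^ n = q ^ i * q ^ (n - i) := by
        rw [← pow_add]; congr 1; omega
      rw [h2] at h1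
      exact Nat.eq_of_mul_eq_mul_right (pow_pos hq0 _) h1.symm
    have hsubset : ((J ^ (n - i) : Ideal R) : Set R) ⊆ (LinearMap.ker f : Set R) := by
      intro x hx
      have : v * x ∈ J ^ i * J ^ (n - i) := Ideal.mul_mem_mul hv hx
      rw [← pow_add] at this
      have he : i + (n - i) = n := by omega
      rw [he, hJn] at this
      simpa [hf, LinearMap.toSpanSingleton_apply, smul_eq_mul, mul_comm] using this
    have hseteq : ((J ^ (n - i) : Ideal R) : Set R) = (LinearMap.ker f : Set R) := by
      apply Set.eq_of_subset_of_ncard_le hsubset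
      rw [← Nat.card_coe_set_eq, ← Nat.card_coe_set_eq]
      have e1 : Nat.card ↥((J ^ (n - i) : Ideal R) : Set R) = Nat.card ↥(J ^ (n - i)) := rfl
      have e2 : Nat.card (LinearMap.ker f : Set R) = Nat.card ↥(LinearMap.ker f) := rfl
      rw [e1, e2, hcardker, hcardJ (n - i) (by omega)]
      have : n - (n - i) = i := by omega
      rw [this]
    intro x
    constructor
    · intro hvx
      have hx : x ∈ LinearMap.ker f := by
        rw [LinearMap.mem_ker, hf, LinearMap.toSpanSingleton_apply, smul_eq_mul, mul_comm]
        exact hvx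
      have hx2 : x ∈ ((J ^ (n - i) : Ideal R) : Set R) := by rw [hseteq]; exact hx
      exact hx2
    · intro hx
      have : x ∈ (LinearMap.ker f : Set R) := hseteq ▸ hx
      have := (LinearMap.mem_ker).mp this
      rwa [hf, LinearMap.toSpanSingleton_apply, smul_eq_mul, mul_comm] at this
  -- solution sets
  have hT : ∀ s : R, s ∈ J ^ l → s ∉ J ^ (l + 1) →
      ∃ t0 : R, (t0 ∈ J ^ (k - l) ∧ t0 ∉ J ^ (k - l + 1) ∧ s * t0 = u) ∧
        {t : R | t ∈ J ^ (k - l) ∧ t ∉ J ^ (k - l + 1) ∧ s * t = u} =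
          (fun w => t0 + w) '' ((J ^ (n - l) : Ideal R) : Set R) := by
    intro s hs hs'
    have hJk : J ^ k = Ideal.span {s} * J ^ (k - l) := by
      rw [hspan l hln s hs hs', ← pow_add]
      congr 1; omega
    have hu2 : u ∈ Ideal.span {s} * J ^ (k - l) := hJk ▸ hu
    obtain ⟨t0, ht0mem, hst0⟩ := Ideal.mem_span_singleton_mul.mp hu2
    have ht0not : t0 ∉ J ^ (k - l + 1) := by
      intro hmem
      apply hu'
      have : s * t0 ∈ J ^ l * J ^ (k - l + 1) := Ideal.mul_mem_mul hs hmem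
      rw [← pow_add] at this
      have he : l + (k - l + 1) = k + 1 := by omega
      rw [he] at this
      rwa [hst0] at this
    refine ⟨t0, ⟨ht0mem, ht0not, hst0⟩, ?_⟩
    have hJnl_le : J ^ (n - l) ≤ J ^ (k - l + 1) := Ideal.pow_le_pow_right (by omega)
    ext t
    simp only [Set.mem_setOf_eq, Set.mem_image, SetLike.mem_coe]
    constructor
    · rintro ⟨ht1, ht2, ht3⟩
      refine ⟨t - t0, ?_, by ring⟩
      have : s * (t - t0) = 0 := by rw [mul_sub, ht3, hst0, sub_self]
      exact (hann l hln s hs hs' (t - t0)).mp this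
    · rintro ⟨w, hw, rfl⟩
      have hw0 : s * w = 0 := (hann l hln s hs hs' w).mpr hw
      have hwk : w ∈ J ^ (k - l + 1) := hJnl_le hw
      refine ⟨?_, ?_, ?_⟩
      · exact Submodule.add_mem _ ht0mem (Ideal.pow_le_pow_right (Nat.le_succ _) hwk)
      · intro hmem
        apply ht0not
        have : t0 + w - w ∈ J ^ (k - l + 1) := Submodule.sub_mem _ hmem hwk
        simpa using this
      · rw [mul_add, hst0, hw0, add_zero]
    -- part 1
  constructor
  · intro s hs hs'
    obtain ⟨t0, _, hSeq⟩ := hT s hs hs'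
    rw [hSeq, Set.ncard_image_of_injective _ (add_right_injective t0)]
    rw [← Nat.card_coe_set_eq]
    have e1 : Nat.card ↥((J ^ (n - l) : Ideal R) : Set R) = Nat.card ↥(J ^ (n - l)) := rfl
    rw [e1, hcardJ (n - l) (by omega)]
    congr 1; omega
  · intro s₁ s₂ hs₁ hs₁' hs₂ hs₂'
    constructor
    · intro hSeq
      obtain ⟨t0, ⟨ht0, ht0', hst0⟩, _⟩ := hT s₁ hs₁ hs₁'
      have ht0mem2 : t0 ∈ {t : R | t ∈ J ^ (k - l) ∧ t ∉ J ^ (k - l + 1) ∧ s₂ * t = u} := by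
        rw [← hSeq]; exact ⟨ht0, ht0', hst0⟩
      obtain ⟨_, _, hst0'⟩ := ht0mem2
      have hzero : t0 * (s₁ - s₂) = 0 := by
        rw [mul_sub, mul_comm t0 s₁, mul_comm t0 s₂, hst0, hst0', sub_self]
      have := (hann (k - l) hkln t0 ht0 ht0' (s₁ - s₂)).mp hzero
      have he : n - (k - l) = n - k + l := by omega
      rwa [he] at this
    · intro hdiff
      have key : ∀ t : R, t ∈ J ^ (k - l) → s₁ * t = s₂ * t := by
        intro t ht
        have : (s₁ - s₂) * t ∈ J ^ (n - k + l) * J ^ (k - l) := Ideal.mul_mem_mul hdiff ht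
        rw [← pow_add] at this
        have he : n - k + l + (k - l) = n := by omega
        rw [he, hJn] at this
        have h0 : (s₁ - s₂) * t = 0 := this
        have h1 : s₁ * t - s₂ * t = 0 := by rw [← sub_mul]; exact h0
        exact sub_eq_zero.mp h1
      ext t
      simp only [Set.mem_setOf_eq]
      constructor
      · rintro ⟨h1, h2, h3⟩
        exact ⟨h1, h2, by rw [← key t h1, h3]⟩
      · rintro ⟨h1, h2, h3⟩
        exact ⟨h1, h2, by rw [key t h1, h3]⟩
end

section
/- Let R be a finite commutative local ring of order q^n, R/J(R) of order q, J(R)^{n-1} ≠ 0. Order R as: the q^n - q^{n-1} units, then the elements of J\J^2, then J^2\J^3, …, then J^{n-1}\{0}, then 0, and let A be the q^n × q^n zero-product matrix A_{s,t} = 1 if s*t = 0, else 0. Then the rank of A (over the reals) is n+1, so 0 is an eigenvalue of A of multiplicity q^n - (n+1). -/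
/-!
Write `𝔪` for the maximal ideal and `q = |R/𝔪|`. While `𝔪^i ≠ 0`, Nakayama makes `𝔪^(i+1) < 𝔪^i`,
and the layer `𝔪^i/𝔪^(i+1)` is a nonzero vector space over `R/𝔪`, so it has at least `q` elements.
Since `|R| = q^n` and `𝔪^(n-1) ≠ 0`, this forces `𝔪^n = 0` and `|𝔪^i| = q^(n-i)`: every layer has
exactly `q` elements, hence no ideal lies strictly between `𝔪^(i+1)` and `𝔪^i`, and by Nakayama
every `x ∈ 𝔪^i \ 𝔪^(i+1)` generates `𝔪^i`. So `(x) = 𝔪^(v x)` with `v x ≤ n`, `v` hits every value,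
and `x * y = 0 ↔ n ≤ v x + v y`.

The zero-product matrix is then the `(n+1) × (n+1)` matrix `[n ≤ i + j]` with rows and columns
repeated along `v`; reversing its rows makes it unitriangular, so the rank is `n + 1`. Since the
matrix is real symmetric, the multiplicity of the eigenvalue `0` is the nullity.
-/

open IsLocalRing

section LocalRing

variable {R : Type*} [CommRing R] [IsLocalRing R]

local notation "𝔪" => maximalIdeal R

theorem card_residueField_le_card {M : Type*} [AddCommGroup M] [Module R M] [Finite M]
    [Nontrivial M] (hM : Module.IsTorsionBySet R M 𝔪) :
    Nat.card (ResidueField R) ≤ Nat.card M := by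
  let _ : Module (ResidueField R) M := hM.module
  have : Module.finrank (ResidueField R) M ≠ 0 := Module.finrank_pos.ne'
  rw [Module.natCard_eq_pow_finrank (K := ResidueField R) (V := M)]
  exact Nat.le_self_pow this _

theorem card_residueField_mul_card_le_card {M : Type*} [AddCommGroup M] [Module R M] [Finite M]
    {N N' : Submodule R M} (hlt : N' < N) (hN : 𝔪 • N ≤ N') :
    Nat.card (ResidueField R) * Nat.card N' ≤ Nat.card N := by
  set P := N'.comap N.subtype
  have hP : Nat.card P = Nat.card N' :=
    Nat.card_congr (Submodule.comapSubtypeEquivOfLe hlt.le).toEquiv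
  have : Finite (N ⧸ P) := Finite.of_surjective _ (Submodule.Quotient.mk_surjective P)
  have : Nontrivial (N ⧸ P) := by
    obtain ⟨x, hxN, hxN'⟩ := SetLike.exists_of_lt hlt
    refine ⟨Submodule.Quotient.mk ⟨x, hxN⟩, 0, fun h => hxN' ?_⟩
    exact (Submodule.Quotient.mk_eq_zero P).mp h
  have hM : Module.IsTorsionBySet R (N ⧸ P) 𝔪 := by
    rintro x ⟨a, ha⟩
    obtain ⟨y, rfl⟩ := Submodule.Quotient.mk_surjective P x
    rw [← Submodule.Quotient.mk_smul, Submodule.Quotient.mk_eq_zero]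
    exact hN (Submodule.smul_mem_smul ha y.2)
  rw [Submodule.card_eq_card_quotient_mul_card P, hP, mul_comm]
  exact Nat.mul_le_mul_left _ (card_residueField_le_card hM)

theorem maximalIdeal_pow_succ_lt [IsNoetherianRing R] {i : ℕ} (h : 𝔪 ^ i ≠ ⊥) :
    𝔪 ^ (i + 1) < 𝔪 ^ i := by
  refine lt_of_le_of_ne (Ideal.pow_le_pow_right i.le_succ) fun heq => h ?_
  refine Submodule.eq_bot_of_le_smul_of_le_jacobson_bot (𝔪) _
    (IsNoetherian.noetherian _) ?_ (maximalIdeal_le_jacobson _)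
  rw [smul_eq_mul, ← pow_succ', heq]

theorem maximalIdeal_pow_ne_bot {n l : ℕ} (hJ : 𝔪 ^ (n - 1) ≠ ⊥) (hl : l < n) :
    𝔪 ^ l ≠ ⊥ :=
  fun h => hJ (le_bot_iff.mp (h ▸ Ideal.pow_le_pow_right (by omega)))

variable [Finite R]

theorem card_residueField_pow_mul_card_le {i k : ℕ} (h : ∀ l < i + k, 𝔪 ^ l ≠ ⊥) :
    Nat.card (ResidueField R) ^ k * Nat.card ↥(𝔪 ^ (i + k)) ≤
      Nat.card ↥(𝔪 ^ i) := by
  induction k with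
  | zero => simp
  | succ k ih =>
    have hstep := card_residueField_mul_card_le_card
      (maximalIdeal_pow_succ_lt (h (i + k) (by omega))) (by rw [smul_eq_mul, ← pow_succ'])
    calc Nat.card (ResidueField R) ^ (k + 1) * Nat.card ↥(𝔪 ^ (i + (k + 1)))
        = Nat.card (ResidueField R) ^ k *
            (Nat.card (ResidueField R) * Nat.card ↥(𝔪 ^ (i + k + 1))) := by
          rw [← add_assoc, pow_succ, mul_assoc]
      _ ≤ Nat.card (ResidueField R) ^ k * Nat.card ↥(𝔪 ^ (i + k)) :=
        Nat.mul_le_mul_left _ hstep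
      _ ≤ Nat.card ↥(𝔪 ^ i) := ih fun l hl => h l (by omega)

theorem one_lt_card_residueField : 1 < Nat.card (ResidueField R) :=
  have : Finite (ResidueField R) := Finite.of_surjective _ residue_surjective
  Finite.one_lt_card

theorem eq_of_lt_of_le_of_card_eq {M : Type*} [AddCommGroup M] [Module R M] [Finite M]
    {N N' P : Submodule R M} (hN : 𝔪 • N ≤ N')
    (hcard : Nat.card N = Nat.card (ResidueField R) * Nat.card N') (h₁ : N' < P) (h₂ : P ≤ N) :
    P = N := by
  by_contra hne
  have hlow := card_residueField_mul_card_le_card h₁ ((Submodule.smul_mono le_rfl h₂).trans hN)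
  have hhigh := card_residueField_mul_card_le_card (lt_of_le_of_ne h₂ hne) (hN.trans h₁.le)
  have hq := one_lt_card_residueField (R := R)
  have hN' : 0 < Nat.card N' := Nat.card_pos
  have := Nat.mul_le_mul_left (Nat.card (ResidueField R)) hlow
  nlinarith

variable {q n : ℕ}

theorem maximalIdeal_pow_eq_bot (hcard : Nat.card R = q ^ n)
    (hres : Nat.card (ResidueField R) = q) (hJ : 𝔪 ^ (n - 1) ≠ ⊥) :
    𝔪 ^ n = ⊥ := by
  have h := card_residueField_pow_mul_card_le (i := 0) (k := n)
    fun l hl => maximalIdeal_pow_ne_bot hJ (by omega)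
  rw [zero_add, pow_zero, Ideal.one_eq_top, Nat.card_congr Submodule.topEquiv.toEquiv, hcard,
    hres] at h
  have hq : 0 < q ^ n := pow_pos (hres ▸ one_lt_card_residueField.le) n
  have : Subsingleton ↥(𝔪 ^ n) :=
    Finite.card_le_one_iff_subsingleton.mp (Nat.le_of_mul_le_mul_left (by simpa using h) hq)
  exact Submodule.eq_bot_of_subsingleton

theorem maximalIdeal_pow_eq_bot_iff (hcard : Nat.card R = q ^ n)
    (hres : Nat.card (ResidueField R) = q) (hJ : 𝔪 ^ (n - 1) ≠ ⊥) {k : ℕ} :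
    𝔪 ^ k = ⊥ ↔ n ≤ k :=
  ⟨fun h => not_lt.mp fun hk => maximalIdeal_pow_ne_bot hJ hk h, fun hk =>
    le_bot_iff.mp (maximalIdeal_pow_eq_bot hcard hres hJ ▸ Ideal.pow_le_pow_right hk)⟩

theorem card_maximalIdeal_pow (hcard : Nat.card R = q ^ n)
    (hres : Nat.card (ResidueField R) = q) (hJ : 𝔪 ^ (n - 1) ≠ ⊥) {i : ℕ}
    (hi : i ≤ n) : Nat.card ↥(𝔪 ^ i) = q ^ (n - i) := by
  apply le_antisymm
  · have h := card_residueField_pow_mul_card_le (i := 0) (k := i)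
      fun l hl => maximalIdeal_pow_ne_bot hJ (by omega)
    rw [zero_add, pow_zero, Ideal.one_eq_top, Nat.card_congr Submodule.topEquiv.toEquiv, hcard,
      hres, ← pow_mul_pow_sub q hi] at h
    exact Nat.le_of_mul_le_mul_left h (pow_pos (hres ▸ one_lt_card_residueField.le) i)
  · have h := card_residueField_pow_mul_card_le (i := i) (k := n - i)
      fun l hl => maximalIdeal_pow_ne_bot hJ (by omega)
    rwa [Nat.add_sub_cancel' hi, maximalIdeal_pow_eq_bot hcard hres hJ,
      (Nat.card_unique : Nat.card (⊥ : Ideal R) = 1), mul_one,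
      hres] at h

theorem maximalIdeal_pow_inj (hcard : Nat.card R = q ^ n)
    (hres : Nat.card (ResidueField R) = q) (hJ : 𝔪 ^ (n - 1) ≠ ⊥) {k l : ℕ}
    (hk : k ≤ n) (hl : l ≤ n) (h : 𝔪 ^ k = 𝔪 ^ l) : k = l := by
  have := congrArg (fun I : Ideal R => Nat.card I) h
  simp only [card_maximalIdeal_pow hcard hres hJ hk, card_maximalIdeal_pow hcard hres hJ hl] at this
  have := Nat.pow_right_injective (hres ▸ one_lt_card_residueField) this
  omega

theorem span_singleton_eq_maximalIdeal_pow (hcard : Nat.card R = q ^ n)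
    (hres : Nat.card (ResidueField R) = q) (hJ : 𝔪 ^ (n - 1) ≠ ⊥) {i : ℕ}
    (hi : i < n) {x : R} (hx : x ∈ 𝔪 ^ i) (hx' : x ∉ 𝔪 ^ (i + 1)) :
    Ideal.span {x} = 𝔪 ^ i := by
  have hlayer : 𝔪 • 𝔪 ^ i = 𝔪 ^ (i + 1) := by
    rw [smul_eq_mul, ← pow_succ']
  have hsup : Ideal.span {x} ⊔ 𝔪 ^ (i + 1) = 𝔪 ^ i := by
    refine eq_of_lt_of_le_of_card_eq hlayer.le ?_ ?_ ?_
    · rw [card_maximalIdeal_pow hcard hres hJ hi.le, card_maximalIdeal_pow hcard hres hJ hi, hres,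
        ← pow_succ']
      congr 1
      omega
    · exact lt_of_le_of_ne le_sup_right fun h =>
        hx' (h ▸ Ideal.mem_sup_left (Ideal.mem_span_singleton_self x))
    · exact sup_le ((Ideal.span_singleton_le_iff_mem _).mpr hx) (Ideal.pow_le_pow_right i.le_succ)
  refine le_antisymm ((Ideal.span_singleton_le_iff_mem _).mpr hx) ?_
  exact Submodule.le_of_le_smul_of_le_jacobson_bot (IsNoetherian.noetherian _)
    (maximalIdeal_le_jacobson _) (hlayer ▸ hsup.ge)

theorem exists_span_singleton_eq_maximalIdeal_pow (hcard : Nat.card R = q ^ n)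
    (hres : Nat.card (ResidueField R) = q) (hJ : 𝔪 ^ (n - 1) ≠ ⊥) (x : R) :
    ∃ k ≤ n, Ideal.span {x} = 𝔪 ^ k := by
  classical
  by_cases hx0 : x = 0
  · exact ⟨n, le_rfl, by rw [hx0, Ideal.span_singleton_eq_bot.mpr rfl,
      maximalIdeal_pow_eq_bot hcard hres hJ]⟩
  set k := Nat.findGreatest (fun k => x ∈ 𝔪 ^ k) n
  have hx : x ∈ 𝔪 ^ k :=
    Nat.findGreatest_spec (P := fun k => x ∈ 𝔪 ^ k) (Nat.zero_le n) (by simp)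
  have hkn : k < n := by
    refine lt_of_le_of_ne (Nat.findGreatest_le n) fun hk => hx0 ?_
    rwa [hk, maximalIdeal_pow_eq_bot hcard hres hJ, Ideal.mem_bot] at hx
  have hx' : x ∉ 𝔪 ^ (k + 1) := Nat.findGreatest_is_greatest k.lt_succ_self hkn
  exact ⟨k, hkn.le, span_singleton_eq_maximalIdeal_pow hcard hres hJ hkn hx hx'⟩

theorem exists_maximalIdeal_pow_eq_span_singleton (hcard : Nat.card R = q ^ n)
    (hres : Nat.card (ResidueField R) = q) (hJ : 𝔪 ^ (n - 1) ≠ ⊥) {k : ℕ}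
    (hk : k ≤ n) : ∃ x : R, Ideal.span {x} = 𝔪 ^ k := by
  rcases hk.lt_or_eq with hk | rfl
  · obtain ⟨x, hx, hx'⟩ :=
      SetLike.exists_of_lt (maximalIdeal_pow_succ_lt (maximalIdeal_pow_ne_bot hJ hk))
    exact ⟨x, span_singleton_eq_maximalIdeal_pow hcard hres hJ hk hx hx'⟩
  · exact ⟨0, by rw [Ideal.span_singleton_eq_bot.mpr rfl, maximalIdeal_pow_eq_bot hcard hres hJ]⟩

theorem exists_surjective_forall_mul_eq_zero_iff (hcard : Nat.card R = q ^ n)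
    (hres : Nat.card (ResidueField R) = q) (hJ : 𝔪 ^ (n - 1) ≠ ⊥) :
    ∃ v : R → Fin (n + 1), Function.Surjective v ∧
      ∀ x y : R, x * y = 0 ↔ n ≤ (v x : ℕ) + v y := by
  have hv (x : R) : ∃ k : Fin (n + 1), Ideal.span {x} = 𝔪 ^ (k : ℕ) :=
    let ⟨k, hk, h⟩ := exists_span_singleton_eq_maximalIdeal_pow hcard hres hJ x
    ⟨⟨k, Nat.lt_succ_of_le hk⟩, h⟩
  choose v hv using hv
  refine ⟨v, fun k => ?_, fun x y => ?_⟩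
  · obtain ⟨x, hx⟩ := exists_maximalIdeal_pow_eq_span_singleton hcard hres hJ k.is_le
    exact ⟨x, Fin.ext <|
      maximalIdeal_pow_inj hcard hres hJ (v x).is_le k.is_le ((hv x).symm.trans hx)⟩
  · rw [← Ideal.span_singleton_eq_bot, ← Ideal.span_singleton_mul_span_singleton, hv x, hv y,
      ← pow_add, maximalIdeal_pow_eq_bot_iff hcard hres hJ]

end LocalRing

namespace Matrix

theorem rank_submatrix_of_surjective {m n₀ K : Type*} [Fintype m] [Fintype n₀] [CommRing K]
    [StrongRankCondition K] (A : Matrix m m K) {f g : n₀ → m} (hf : Function.Surjective f)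
    (hg : Function.Surjective g) : (A.submatrix f g).rank = A.rank := by
  refine le_antisymm (rank_submatrix_le A f g) ?_
  have hA : (A.submatrix f g).submatrix (Function.surjInv hf) (Function.surjInv hg) = A := by
    ext i j
    simp only [submatrix_apply, Function.surjInv_eq hf, Function.surjInv_eq hg]
  conv_lhs => rw [← hA]
  exact rank_submatrix_le _ _ _

theorem rank_of_le_add (K : Type*) [Field K] (n : ℕ) :
    (of fun i j : Fin (n + 1) => if n ≤ (i : ℕ) + j then (1 : K) else 0).rank = n + 1 := by
  set B : Matrix (Fin (n + 1)) (Fin (n + 1)) K := of fun i j => if n ≤ (i : ℕ) + j then 1 else 0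
  have hrev : ∀ i j, B.submatrix Fin.revPerm (Equiv.refl _) i j = if i ≤ j then 1 else 0 := by
    intro i j
    simp only [B, submatrix_apply, Fin.revPerm_apply, Equiv.refl_apply, of_apply, Fin.val_rev]
    exact if_congr (by rw [Fin.le_def]; omega) rfl rfl
  have hupper : (B.submatrix Fin.revPerm (Equiv.refl _)).IsUpperTriangular := fun i j hij =>
    (hrev i j).trans (if_neg (not_le.mpr hij))
  have hdet : (B.submatrix Fin.revPerm (Equiv.refl _)).det = 1 := by
    rw [det_of_isUpperTriangular hupper]
    exact Finset.prod_eq_one fun i _ => by rw [hrev, if_pos le_rfl]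
  rw [← rank_submatrix B Fin.revPerm (Equiv.refl _),
    rank_of_isUnit _ ((isUnit_iff_isUnit_det _).mpr (hdet ▸ isUnit_one)), Fintype.card_fin]

theorem IsHermitian.rank_add_rootMultiplicity_zero_charpoly {n 𝕜 : Type*} [Fintype n]
    [DecidableEq n] [RCLike 𝕜] {A : Matrix n n 𝕜} (hA : A.IsHermitian) :
    A.rank + A.charpoly.rootMultiplicity 0 = Fintype.card n := by
  rw [← Polynomial.count_roots, hA.roots_charpoly_eq_eigenvalues, Multiset.count_map,
    hA.rank_eq_card_non_zero_eigs, Fintype.card_subtype, ← Finset.filter_val, Finset.card_val,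
    add_comm]
  simp only [Function.comp_apply, eq_comm (a := (0 : 𝕜)), RCLike.ofReal_eq_zero, ne_eq]
  exact Finset.card_filter_add_card_filter_not _

end Matrix

theorem rank_zero_product_matrix_general {R : Type*} [CommRing R] [Fintype R] [DecidableEq R]
    [IsLocalRing R] (q n : ℕ)
    (hcard : Fintype.card R = q ^ n)
    (hres : Nat.card (R ⧸ (⊥ : Ideal R).jacobson) = q)
    (hJ : ((⊥ : Ideal R).jacobson) ^ (n - 1) ≠ ⊥) :
    let A : Matrix R R ℝ := Matrix.of fun x y => if x * y = 0 then 1 else 0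
    A.rank = n + 1 ∧ A.charpoly.rootMultiplicity 0 = q ^ n - (n + 1) := by
  intro A
  rw [jacobson_eq_maximalIdeal ⊥ bot_ne_top] at hres hJ
  obtain ⟨v, hv, hmul⟩ :=
    exists_surjective_forall_mul_eq_zero_iff (Nat.card_eq_fintype_card.trans hcard) hres hJ
  have hA : A = (Matrix.of fun i j : Fin (n + 1) =>
      if n ≤ (i : ℕ) + j then (1 : ℝ) else 0).submatrix v v := by
    ext x y
    simp only [A, Matrix.of_apply, Matrix.submatrix_apply, hmul]
  have hrank : A.rank = n + 1 := by
    rw [hA, Matrix.rank_submatrix_of_surjective _ hv hv, Matrix.rank_of_le_add]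
  have hherm : A.IsHermitian := by
    ext x y
    simp [A, mul_comm]
  have hnullity := hherm.rank_add_rootMultiplicity_zero_charpoly
  exact ⟨hrank, by omega⟩

theorem rank_zero_product_matrix {R : Type*} [CommRing R] [Fintype R] [DecidableEq R]
    [IsLocalRing R] (q n : ℕ) (hn : 0 < n)
    (hcard : Fintype.card R = q ^ n)
    (hres : Nat.card (R ⧸ (⊥ : Ideal R).jacobson) = q)
    (hJ : ((⊥ : Ideal R).jacobson) ^ (n - 1) ≠ ⊥) :
    let A : Matrix R R ℝ := Matrix.of fun x y => if x * y = 0 then 1 else 0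
    A.rank = n + 1 ∧ A.charpoly.rootMultiplicity 0 = q ^ n - (n + 1) :=
  rank_zero_product_matrix_general q n hcard hres hJ
end

section
/- Let R be a finite commutative local ring with |R| = q^n, R/J(R) a field of odd order q, and let u ∈ R^* be a square, u = s^2. Then the real characteristic polynomial of the product matrix A_u(R) is -λ^{q^{n-1}}(λ-1)^{(q^n-q^{n-1}+2)/2}(λ+1)^{(q^n-q^{n-1}-2)/2}. -/
/-!
No product of a non-unit equals the unit `u`, so `A_u(R) - λ` is block diagonal for the splitting
of `R` into units and non-units. On the `q ^ (n - 1)` non-units it is `-λ`; on `Rˣ` it is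
`P_σ - λ` for the permutation matrix of the involution `σ x = u / x`. Peeling off one orbit at a
time, an involution with `f` fixed points and `m` two-cycles gives the determinant
`(1 - λ) ^ f * (λ ^ 2 - 1) ^ m`. The fixed points of `σ` are the square roots of `u = s ^ 2`,
which are exactly `±s` because `2` is a unit of the local ring when `q` is odd.
-/

namespace Equiv.Perm

variable {α K : Type*} [Fintype α] [DecidableEq α] [CommRing K]

theorem det_permMatrix_sub_smul_one_eq_mul (σ : Perm α) (p : α → Prop) [DecidablePred p]
    (hp : ∀ x, p (σ x) ↔ p x) (c : K) :
    (σ.permMatrix K - c • 1).det =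
      ((σ.subtypePerm hp).permMatrix K - c • 1).det *
        ((σ.subtypePerm (p := fun x => ¬p x) fun x => (hp x).not).permMatrix K -
          c • 1).det := by
  rw [Matrix.twoBlockTriangular_det _ p]
  · congr 2 <;> ext i j <;>
      simp [Matrix.toSquareBlockProp, Matrix.toBlock, Matrix.one_apply, Subtype.ext_iff]
  · intro i hi j hj
    have hσ : σ i ≠ j := fun h => hi ((hp i).1 (h ▸ hj))
    have hne : i ≠ j := by rintro rfl; exact hi hj
    simp [hσ, hne]

theorem det_one_permMatrix_sub_smul_one (c : K) :
    ((1 : Perm α).permMatrix K - c • 1).det = (1 - c) ^ Fintype.card α := by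
  have h : (1 : Matrix α α K) - c • 1 = (1 - c) • 1 := by rw [sub_smul, one_smul]
  rw [Matrix.permMatrix_one, h, Matrix.det_smul, Matrix.det_one, mul_one]

theorem det_permMatrix_sub_smul_one_of_card_eq_two (σ : Perm α) (h2 : Fintype.card α = 2)
    (hσ : ∀ x, σ x ≠ x) (c : K) : (σ.permMatrix K - c • 1).det = c ^ 2 - 1 := by
  set e : Fin 2 ≃ α := (Fintype.equivFinOfCardEq h2).symm
  have hfin : ∀ i j : Fin 2, j ≠ i → j = Equiv.swap 0 1 i := by decide
  have hswap : ∀ i, σ (e i) = e (Equiv.swap 0 1 i) := fun i => by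
    rw [← e.symm_apply_eq]
    exact hfin _ _ (by rw [Ne, e.symm_apply_eq]; exact hσ (e i))
  rw [← Matrix.det_submatrix_equiv_self e, Matrix.det_fin_two]
  simp [hswap]
  ring

theorem det_permMatrix_sub_smul_one_of_involutive_of_ne (σ : Perm α)
    (hinv : Function.Involutive σ) (hσ : ∀ x, σ x ≠ x) (c : K) :
    (σ.permMatrix K - c • 1).det = (c ^ 2 - 1) ^ (Fintype.card α / 2) := by
  induction h : Fintype.card α using Nat.strong_induction_on generalizing α with
  | _ n ih =>
  rcases isEmpty_or_nonempty α with hα | ⟨⟨a⟩⟩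
  · simp [← h]
  let orbit : α → Prop := fun x => x = a ∨ x = σ a
  have horbit : ∀ x, orbit (σ x) ↔ orbit x := fun x => by
    simp only [orbit, hinv.eq_iff, hinv a]
    exact Or.comm
  have hcard : Fintype.card {x // orbit x} = 2 := by
    rw [Fintype.card_subtype, ← Finset.card_pair (hσ a).symm]
    congr 1
    ext
    simp [orbit]
  have hn : 2 ≤ n := h ▸ hcard ▸ Fintype.card_subtype_le orbit
  rw [det_permMatrix_sub_smul_one_eq_mul σ orbit horbit,
    det_permMatrix_sub_smul_one_of_card_eq_two _ hcard
      (fun x hx => hσ x (congrArg Subtype.val hx)),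
    ih (n - 2) (by omega) _ (fun x => Subtype.ext (hinv x))
      (fun x hx => hσ x (congrArg Subtype.val hx)) (by rw [Fintype.card_subtype_compl, hcard, h]),
    ← pow_succ', show (n - 2) / 2 + 1 = n / 2 by omega]

theorem det_permMatrix_sub_smul_one_of_involutive (σ : Perm α) (hinv : Function.Involutive σ)
    (c : K) :
    (σ.permMatrix K - c • 1).det =
      (c ^ 2 - 1) ^ (σ.support.card / 2) * (1 - c) ^ (Fintype.card α - σ.support.card) := by
  let moved : α → Prop := fun x => σ x ≠ x
  have hp : ∀ x, moved (σ x) ↔ moved x := fun x => σ.injective.ne_iff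
  have hfix : σ.subtypePerm (p := fun x => ¬moved x) (fun x => (hp x).not) = 1 :=
    ext fun x => Subtype.ext (not_not.1 x.2)
  have hcard : Fintype.card {x // moved x} = σ.support.card := Fintype.card_subtype _
  rw [det_permMatrix_sub_smul_one_eq_mul σ moved hp,
    det_permMatrix_sub_smul_one_of_involutive_of_ne (σ.subtypePerm hp)
      (fun x => Subtype.ext (hinv x)) (fun x hx => x.2 (congrArg Subtype.val hx)),
    hfix, det_one_permMatrix_sub_smul_one, Fintype.card_subtype_compl moved, hcard]

end Equiv.Perm

@[simps]
noncomputable def Units.equivIsUnit (M : Type*) [Monoid M] : Mˣ ≃ {x : M // IsUnit x} where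
  toFun a := ⟨a, a.isUnit⟩
  invFun x := x.2.unit
  left_inv _ := Units.ext rfl
  right_inv _ := rfl

theorem Nat.card_units_add_card_nonunits (M : Type*) [Monoid M] [Finite M] :
    Nat.card Mˣ + Nat.card (nonunits M) = Nat.card M := by
  rw [Nat.card_congr (Units.equivIsUnit M), ← Set.ncard_add_ncard_compl {x : M | IsUnit x}]
  rfl

theorem mul_ne_of_not_isUnit_left {M : Type*} [CommMonoid M] (u : Mˣ) {x : M} (hx : ¬IsUnit x)
    (y : M) : x * y ≠ u :=
  fun h => hx (isUnit_of_mul_isUnit_left (h ▸ u.isUnit))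

def productMatrix (K : Type*) {M : Type*} [Monoid M] [DecidableEq M] [Zero K] [One K] (u : M) :
    Matrix M M K :=
  Matrix.of fun x y => if x * y = u then 1 else 0

section ProductMatrix

variable {K M : Type*} [CommRing K] [CommMonoid M] [DecidableEq M]

theorem productMatrix_sub_smul_one_toSquareBlockProp_isUnit (u : Mˣ) (c : K) :
    ((productMatrix K (u : M) - c • 1).toSquareBlockProp IsUnit).submatrix
        (Units.equivIsUnit M) (Units.equivIsUnit M) =
      Equiv.Perm.permMatrix K (Equiv.divLeft u) - c • 1 := by
  ext a b
  have hmul : (a : M) * b = u ↔ Equiv.divLeft u a = b := by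
    rw [Equiv.divLeft_apply, eq_comm, div_eq_iff_eq_mul', ← Units.val_mul, Units.val_inj, eq_comm]
  simp [productMatrix, Matrix.toSquareBlockProp, Matrix.toBlock, Matrix.one_apply, hmul,
    Units.val_inj]

theorem productMatrix_sub_smul_one_toSquareBlockProp_not_isUnit (u : Mˣ) (c : K) :
    (productMatrix K (u : M) - c • 1).toSquareBlockProp (fun x => ¬IsUnit x) = -c • 1 := by
  ext i j
  rcases eq_or_ne i j with rfl | hij
  · simp [Matrix.toSquareBlockProp, Matrix.toBlock, productMatrix, mul_ne_of_not_isUnit_left u i.2]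
  · simp [Matrix.toSquareBlockProp, Matrix.toBlock, productMatrix, mul_ne_of_not_isUnit_left u i.2,
      hij, Subtype.val_injective.ne hij]

theorem det_productMatrix_sub_smul_one [Fintype M] (u : Mˣ) (c : K) :
    (productMatrix K (u : M) - c • 1).det =
      (Equiv.Perm.permMatrix K (Equiv.divLeft u) - c • 1).det * (-c) ^ Nat.card (nonunits M) := by
  rw [Matrix.twoBlockTriangular_det _ IsUnit,
    ← Matrix.det_submatrix_equiv_self (Units.equivIsUnit M),
    productMatrix_sub_smul_one_toSquareBlockProp_isUnit,
    productMatrix_sub_smul_one_toSquareBlockProp_not_isUnit, Matrix.det_smul, Matrix.det_one,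
    mul_one, ← Nat.card_eq_fintype_card]
  · rfl
  · intro i hi j hj
    have hij : i ≠ j := by rintro rfl; exact hi hj
    simp [productMatrix, mul_ne_of_not_isUnit_left u hi, hij]

end ProductMatrix

namespace IsLocalRing

variable {R : Type*} [CommRing R] [IsLocalRing R]

theorem isUnit_two_of_odd_card_residueField [Finite (ResidueField R)]
    (h : Odd (Nat.card (ResidueField R))) : IsUnit (2 : R) := by
  have := Fintype.ofFinite (ResidueField R)
  have hchar : ringChar (ResidueField R) ≠ 2 := by
    rw [Ne, FiniteField.even_card_iff_char_two, ← Nat.card_eq_fintype_card, ← Nat.even_iff]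
    exact Nat.not_even_iff_odd.2 h
  rw [← residue_ne_zero_iff_isUnit, map_ofNat]
  exact Ring.two_ne_zero hchar

theorem sq_eq_sq_iff_eq_or_eq_neg_of_isUnit (h2 : IsUnit (2 : R)) {x y : R} (hy : IsUnit y) :
    x ^ 2 = y ^ 2 ↔ x = y ∨ x = -y := by
  refine ⟨fun h => ?_, by rintro (rfl | rfl) <;> ring⟩
  have hprod : (y - x) * (x + y) = 0 := by linear_combination -h
  have hsum : IsUnit ((x + y) + (y - x)) := by
    rw [show (x + y) + (y - x) = 2 * y by ring]
    exact h2.mul hy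
  rcases isUnit_or_isUnit_of_isUnit_add hsum with hunit | hunit
  · exact .inl (sub_eq_zero.1 (hunit.mul_left_eq_zero.1 hprod)).symm
  · exact .inr (eq_neg_of_add_eq_zero_left (hunit.mul_right_eq_zero.1 hprod))

theorem card_nonunits_mul_card_residueField [Finite R] :
    Nat.card (nonunits R) * Nat.card (ResidueField R) = Nat.card R :=
  (Submodule.card_eq_card_quotient_mul_card (maximalIdeal R)).symm

theorem card_nonunits_eq_pow [Finite R] {q n : ℕ} (hn : 0 < n)
    (hq : Nat.card (ResidueField R) = q) (hR : Nat.card R = q ^ n) :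
    Nat.card (nonunits R) = q ^ (n - 1) := by
  have : Finite (ResidueField R) := .of_surjective _ residue_surjective
  have hq0 : 0 < q := hq ▸ Nat.card_pos
  have h := card_nonunits_mul_card_residueField (R := R)
  rw [hq, hR, ← pow_sub_one_mul hn.ne'] at h
  exact Nat.eq_of_mul_eq_mul_right hq0 h

theorem support_divLeft_sq [Fintype Rˣ] [DecidableEq Rˣ] (h2 : IsUnit (2 : R)) (t : Rˣ) :
    Equiv.Perm.support (Equiv.divLeft (t ^ 2)) = {t, -t}ᶜ := by
  ext x
  rw [Equiv.Perm.mem_support, Equiv.divLeft_apply, Ne, div_eq_iff_eq_mul, eq_comm, ← sq,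
    Finset.mem_compl, Finset.mem_insert, Finset.mem_singleton]
  simp only [Units.ext_iff, Units.val_neg, Units.val_pow_eq_pow_val]
  rw [sq_eq_sq_iff_eq_or_eq_neg_of_isUnit h2 t.isUnit]

theorem card_support_divLeft_sq [Fintype Rˣ] [DecidableEq Rˣ] (h2 : IsUnit (2 : R)) (t : Rˣ) :
    (Equiv.Perm.support (Equiv.divLeft (t ^ 2))).card + 2 = Fintype.card Rˣ := by
  have hne : t ≠ -t := fun h => by
    have : 2 * (t : R) = 0 := by rw [two_mul]; nth_rw 2 [h]; push_cast; ring
    exact not_isUnit_zero (this ▸ h2.mul t.isUnit)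
  rw [support_divLeft_sq h2, ← Finset.card_pair hne, Finset.card_compl_add_card]

end IsLocalRing

theorem charpoly_unit_square_odd {R : Type*} [CommRing R] [Fintype R] [DecidableEq R]
    [IsLocalRing R] (q n : ℕ) (hn : 0 < n) (hq : Odd q)
    (hcard : Fintype.card R = q ^ n)
    (hres : Nat.card (R ⧸ (⊥ : Ideal R).jacobson) = q)
    (u s : R) (hu : IsUnit u) (hs : u = s ^ 2) :
    ∀ lam : ℝ,
      ((Matrix.of fun x y : R => if x * y = u then (1 : ℝ) else 0) - lam • 1).det =
        -lam ^ (q ^ (n - 1)) * (lam - 1) ^ ((q ^ n - q ^ (n - 1) + 2) / 2) *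
          (lam + 1) ^ ((q ^ n - q ^ (n - 1) - 2) / 2) := by
  intro lam
  have hres' : Nat.card (IsLocalRing.ResidueField R) = q := by
    rwa [IsLocalRing.jacobson_eq_maximalIdeal ⊥ bot_ne_top] at hres
  have : Finite (IsLocalRing.ResidueField R) := .of_surjective _ IsLocalRing.residue_surjective
  have h2 : IsUnit (2 : R) := IsLocalRing.isUnit_two_of_odd_card_residueField (hres' ▸ hq)
  obtain ⟨t, rfl⟩ : IsUnit s := (isUnit_pow_iff two_ne_zero).1 (hs ▸ hu)
  rw [← Units.val_pow_eq_pow_val] at hs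
  subst hs
  have hnonunits := IsLocalRing.card_nonunits_eq_pow hn hres'
    (Nat.card_eq_fintype_card.trans hcard)
  have hunits : Fintype.card Rˣ = q ^ n - q ^ (n - 1) := by
    have h := Nat.card_units_add_card_nonunits R
    rw [hnonunits, Nat.card_eq_fintype_card, Nat.card_eq_fintype_card (α := R), hcard] at h
    omega
  have hsupport := IsLocalRing.card_support_divLeft_sq h2 t
  change (productMatrix ℝ ((t ^ 2 : Rˣ) : R) - lam • 1).det = _
  rw [det_productMatrix_sub_smul_one, Equiv.Perm.det_permMatrix_sub_smul_one_of_involutive _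
      (Equiv.divLeft_involutive _), hnonunits, ← hunits, ← hsupport, Odd.neg_pow hq.pow,
    show lam ^ 2 - 1 = (lam - 1) * (lam + 1) by ring, mul_pow]
  set k := (Equiv.Perm.support (Equiv.divLeft (t ^ 2))).card
  rw [show k + 2 - k = 2 by omega, show (k + 2 + 2) / 2 = k / 2 + 2 by omega,
    show k + 2 - 2 = k by omega]
  ring
end
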